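/- Let $f_1, \dots, f_n : \mathbb{R}^p \to \mathbb{R}$ each be convex and $L$-smooth, set $g = \frac1n \sum_{i=1}^n f_i$, and let $x_\star$ satisfy $\nabla g(x_\star) = 0$. Then for any $\tilde{x} \in \mathbb{R}^p$, $\frac{1}{n}\sum_{i=1}^n \|\nabla f_i(x_\star) - \nabla f_i(\tilde{x}) + \nabla g(\tilde{x})\|^2 \le 2L \left( g(\tilde{x}) - g(x_\star) \right)$. -/

import Mathlib

open RealInnerProductSpace Finset

lemma descent {p : ℕ} (f : EuclideanSpace ℝ (Fin p) → ℝ)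
    (f' : EuclideanSpace ℝ (Fin p) → EuclideanSpace ℝ (Fin p))
    (hdiff : ∀ x, HasGradientAt f (f' x) x) (L : ℝ)
    (hsmooth : ∀ x y, ‖f' x - f' y‖ ≤ L * ‖x - y‖)
    (x y : EuclideanSpace ℝ (Fin p)) :
    f y ≤ f x + ⟪f' x, y - x⟫ + L / 2 * ‖y - x‖ ^ 2 := by
  set d := y - x with hd
  set ψ : ℝ → ℝ := fun t => f (x + t • d) - t * ⟪f' x, d⟫ - L * t ^ 2 / 2 * ‖d‖ ^ 2 with hψ
  have hderiv : ∀ t : ℝ, HasDerivAt ψ (⟪f' (x + t • d), d⟫ - ⟪f' x, d⟫ - L * t * ‖d‖ ^ 2) t := by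
    intro t
    have hc : HasDerivAt (fun t : ℝ => x + t • d) d t := by
      simpa using ((hasDerivAt_id t).smul_const d).const_add x
    have h1 : HasDerivAt (fun t : ℝ => f (x + t • d)) ⟪f' (x + t • d), d⟫ t := by
      have := ((hdiff (x + t • d)).hasFDerivAt).comp_hasDerivAt t hc
      simp at this; exact this
    have h2 : HasDerivAt (fun t : ℝ => t * ⟪f' x, d⟫) ⟪f' x, d⟫ t := by
      simpa using (hasDerivAt_id t).mul_const (⟪f' x, d⟫)
    have h3 : HasDerivAt (fun t : ℝ => L * t ^ 2 / 2 * ‖d‖ ^ 2) (L * t * ‖d‖ ^ 2) t := by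
      have : HasDerivAt (fun t : ℝ => t ^ 2) (2 * t) t := by
        simpa using hasDerivAt_pow 2 t
      have := ((this.const_mul L).div_const 2).mul_const (‖d‖ ^ 2)
      rw [show L * t * ‖d‖ ^ 2 = L * (2 * t) / 2 * ‖d‖ ^ 2 by ring]; exact this
    exact (h1.sub h2).sub h3
  have hanti : AntitoneOn ψ (Set.Icc 0 1) := by
    apply antitoneOn_of_deriv_nonpos (convex_Icc 0 1)
    · exact fun t _ => (hderiv t).continuousAt.continuousWithinAt
    · intro t ht
      exact ((hderiv t).differentiableAt).differentiableWithinAt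
    · intro t ht
      rw [interior_Icc] at ht
      rw [(hderiv t).deriv]
      have h1 : ⟪f' (x + t • d) - f' x, d⟫ ≤ L * t * ‖d‖ ^ 2 := by
        calc ⟪f' (x + t • d) - f' x, d⟫ ≤ ‖f' (x + t • d) - f' x‖ * ‖d‖ :=
              real_inner_le_norm _ _
          _ ≤ (L * ‖(x + t • d) - x‖) * ‖d‖ := by
              exact mul_le_mul_of_nonneg_right (hsmooth _ _) (norm_nonneg _)
          _ = L * t * ‖d‖ ^ 2 := by
              rw [add_sub_cancel_left, norm_smul]
              simp [abs_of_nonneg ht.1.le]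
              ring
      have := inner_sub_left (𝕜 := ℝ) (f' (x + t • d)) (f' x) d
      linarith [h1, this.symm ▸ h1]
  have h01 : ψ 1 ≤ ψ 0 := hanti (by norm_num) (by norm_num) zero_le_one
  simp only [hψ, one_smul, zero_smul, add_zero, one_mul, one_pow, zero_pow, mul_zero, zero_mul,
    zero_div, sub_zero] at h01
  have hy : x + d = y := by rw [hd]; abel
  rw [hy] at h01
  nlinarith [h01]

lemma coco {p : ℕ} (f : EuclideanSpace ℝ (Fin p) → ℝ)
    (f' : EuclideanSpace ℝ (Fin p) → EuclideanSpace ℝ (Fin p))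
    (hdiff : ∀ x, HasGradientAt f (f' x) x) (L : ℝ) (hL : 0 < L)
    (hconv : ∀ x y, f x ≥ f y + ⟪f' y, x - y⟫)
    (hsmooth : ∀ x y, ‖f' x - f' y‖ ≤ L * ‖x - y‖)
    (x y : EuclideanSpace ℝ (Fin p)) :
    ‖f' x - f' y‖ ^ 2 ≤ 2 * L * (f x - f y - ⟪f' y, x - y⟫) := by
  set z : EuclideanSpace ℝ (Fin p) := x - (1 / L) • (f' x - f' y) with hz
  have h1 := descent f f' hdiff L hsmooth x z
  have h2 := hconv z y
  have hzx : z - x = -((1 / L) • (f' x - f' y)) := by rw [hz]; abel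
  have hzy : z - y = (x - y) - (1 / L) • (f' x - f' y) := by rw [hz]; abel
  rw [hzx] at h1
  rw [hzy] at h2
  have e1 : ⟪f' x, -((1 / L) • (f' x - f' y))⟫ = -((1 / L) * ⟪f' x, f' x - f' y⟫) := by
    rw [inner_neg_right, real_inner_smul_right]
  have e2 : L / 2 * ‖-((1 / L) • (f' x - f' y))‖ ^ 2 = 1 / (2 * L) * ‖f' x - f' y‖ ^ 2 := by
    rw [norm_neg, norm_smul]
    rw [Real.norm_eq_abs, abs_of_pos (by positivity : (0:ℝ) < 1 / L)]
    field_simp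
  have e3 : ⟪f' y, (x - y) - (1 / L) • (f' x - f' y)⟫
      = ⟪f' y, x - y⟫ - (1 / L) * ⟪f' y, f' x - f' y⟫ := by
    rw [inner_sub_right, real_inner_smul_right]
  rw [e1, e2] at h1
  rw [e3] at h2
  have e4 : ⟪f' x, f' x - f' y⟫ - ⟪f' y, f' x - f' y⟫ = ‖f' x - f' y‖ ^ 2 := by
    rw [← inner_sub_left, real_inner_self_eq_norm_sq]
  have h5 : (1 / L) * ⟪f' x, f' x - f' y⟫ - (1 / L) * ⟪f' y, f' x - f' y⟫
      = (1 / L) * ‖f' x - f' y‖ ^ 2 := by rw [← e4]; ring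
  have key : 1 / (2 * L) * ‖f' x - f' y‖ ^ 2 ≤ f x - f y - ⟪f' y, x - y⟫ := by
    have hLL : (1 / L) * ‖f' x - f' y‖ ^ 2 - 1 / (2 * L) * ‖f' x - f' y‖ ^ 2
        = 1 / (2 * L) * ‖f' x - f' y‖ ^ 2 := by field_simp; ring
    linarith [h1, h2, h5, hLL]
  have := mul_le_mul_of_nonneg_left key (by positivity : (0:ℝ) ≤ 2 * L)
  calc ‖f' x - f' y‖ ^ 2 = 2 * L * (1 / (2 * L) * ‖f' x - f' y‖ ^ 2) := by
        field_simp
    _ ≤ 2 * L * (f x - f y - ⟪f' y, x - y⟫) := this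

theorem stmt_10 (p n : ℕ) (hn : 0 < n)
    (f : Fin n → EuclideanSpace ℝ (Fin p) → ℝ)
    (f' : Fin n → EuclideanSpace ℝ (Fin p) → EuclideanSpace ℝ (Fin p))
    (hdiff : ∀ i x, HasGradientAt (f i) (f' i x) x)
    (L : ℝ) (hL : 0 < L)
    (hconv : ∀ i x y, f i x ≥ f i y + ⟪f' i y, x - y⟫)
    (hsmooth : ∀ i x y, ‖f' i x - f' i y‖ ≤ L * ‖x - y‖)
    (g : EuclideanSpace ℝ (Fin p) → ℝ) (hg : ∀ x, g x = (1 / n : ℝ) * ∑ i, f i x)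
    (g' : EuclideanSpace ℝ (Fin p) → EuclideanSpace ℝ (Fin p))
    (hg' : ∀ x, g' x = (1 / n : ℝ) • ∑ i, f' i x)
    (xs : EuclideanSpace ℝ (Fin p)) (hxs : g' xs = 0) :
    ∀ xt, (1 / n : ℝ) * ∑ i, ‖f' i xs - f' i xt + g' xt‖^2
      ≤ 2 * L * (g xt - g xs) := by
  intro xt
  have hn' : (0:ℝ) < n := by exact_mod_cast hn
  set m : EuclideanSpace ℝ (Fin p) := g' xt with hm
  -- sum of gradients at xs is zero
  have hsum0 : ∑ i, f' i xs = 0 := by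
    have := hxs
    rw [hg' xs] at this
    have h := congrArg (fun v => (n:ℝ) • v) this
    simp only [smul_smul, smul_zero] at h
    rwa [mul_one_div, div_self (ne_of_gt hn'), one_smul] at h
  have hsumt : ∑ i, f' i xt = (n:ℝ) • m := by
    rw [hm, hg' xt, smul_smul, mul_one_div, div_self (ne_of_gt hn'), one_smul]
  -- expand each term
  have hexp : ∀ i : Fin n, ‖f' i xs - f' i xt + m‖^2
      = ‖f' i xs - f' i xt‖^2 + 2 * ⟪f' i xs - f' i xt, m⟫ + ‖m‖^2 := by
    intro i
    rw [← real_inner_self_eq_norm_sq, ← real_inner_self_eq_norm_sq,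
      ← real_inner_self_eq_norm_sq, inner_add_add_self]
    rw [real_inner_comm m (f' i xs - f' i xt)]
    ring
  have hS1 : ∑ i, ‖f' i xs - f' i xt + m‖^2
      = (∑ i, ‖f' i xs - f' i xt‖^2) - (n:ℝ) * ‖m‖^2 := by
    have hmid : ∑ i : Fin n, 2 * ⟪f' i xs - f' i xt, m⟫ = -2 * ((n:ℝ) * ‖m‖^2) := by
      rw [← Finset.mul_sum, ← sum_inner, Finset.sum_sub_distrib, hsum0, hsumt, zero_sub,
        inner_neg_left, real_inner_smul_left, real_inner_self_eq_norm_sq]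
      ring
    have hconst : ∑ _i : Fin n, ‖m‖^2 = (n:ℝ) * ‖m‖^2 := by
      simp [Finset.sum_const, Finset.card_univ, nsmul_eq_mul]
    rw [Finset.sum_congr rfl (fun i _ => hexp i), Finset.sum_add_distrib, Finset.sum_add_distrib,
      hmid, hconst]
    ring
  -- bound sum of squared differences
  have hS2 : ∑ i, ‖f' i xs - f' i xt‖^2
      ≤ 2 * L * ((n:ℝ) * (g xt - g xs)) := by
    have hterm : ∀ i : Fin n, ‖f' i xs - f' i xt‖^2
        ≤ 2 * L * (f i xt - f i xs - ⟪f' i xs, xt - xs⟫) := by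
      intro i
      have := coco (f i) (f' i) (hdiff i) L hL (hconv i) (hsmooth i) xt xs
      rwa [← norm_neg, neg_sub] at this
    calc ∑ i, ‖f' i xs - f' i xt‖^2
        ≤ ∑ i, 2 * L * (f i xt - f i xs - ⟪f' i xs, xt - xs⟫) :=
          Finset.sum_le_sum (fun i _ => hterm i)
      _ = 2 * L * ((∑ i, f i xt) - (∑ i, f i xs) - ⟪∑ i, f' i xs, xt - xs⟫) := by
          rw [← Finset.mul_sum, Finset.sum_sub_distrib, Finset.sum_sub_distrib, sum_inner]
      _ = 2 * L * ((n:ℝ) * (g xt - g xs)) := by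
          rw [hsum0, inner_zero_left, hg xt, hg xs]
          field_simp
          ring
  calc (1 / n : ℝ) * ∑ i, ‖f' i xs - f' i xt + g' xt‖^2
      ≤ (1 / n : ℝ) * ∑ i, ‖f' i xs - f' i xt‖^2 := by
        apply mul_le_mul_of_nonneg_left _ (by positivity)
        rw [hS1]
        nlinarith [sq_nonneg ‖m‖, hn']
    _ ≤ (1 / n : ℝ) * (2 * L * ((n:ℝ) * (g xt - g xs))) :=
        mul_le_mul_of_nonneg_left hS2 (by positivity)
    _ = 2 * L * (g xt - g xs) := by field_simp
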